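/- arXiv:1105.4157 — 4 statements merged into one kernel-verified Lean document; each statement's English description precedes it below -/
import Mathlib

section
/- Let λˢ < 0 be a real root of Δ₀ (with hypotheses d ≥ 0, c ∈ ℝ, a < 0, 0 < b < −a, and J as usual with J > 0 on an open interval). Then for every μ ≠ 0, Δ₀(λˢ + iμ) ≠ 0. That is, the only zero of Δ₀ on the vertical line Re z = λˢ is λˢ itself. -/
open MeasureTheory Real Complex

/-!
On the line `Re z = λ`, `Re Δ₀(λ + iμ) = Δ₀(λ) - dμ² - b ∫ J(s) e^{-λs} (1 - cos μs) ds`.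
The weight `J(s) e^{-λs}` is nonnegative and positive on an interval, while `cos μs = 1` only on
the countable set `(2π/μ)ℤ`, so the last integral is positive and `Re Δ₀(λ + iμ) < 0` for `μ ≠ 0`.
-/

theorem Real.countable_setOf_cos_mul_eq_one {μ : ℝ} (hμ : μ ≠ 0) :
    {s : ℝ | Real.cos (μ * s) = 1}.Countable := by
  refine (Set.countable_range fun n : ℤ => n * (2 * π) / μ).mono fun s hs => ?_
  obtain ⟨n, hn⟩ := (Real.cos_eq_one_iff _).mp hs
  exact ⟨n, by simp only [hn]; field_simp⟩

theorem integral_mul_cos_lt_integral {m : Measure ℝ} [NullSingletonClass m] {g : ℝ → ℝ}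
    (hg : Integrable g m) (hg_nonneg : 0 ≤ g) (hg_supp : 0 < m (Function.support g)) {μ : ℝ}
    (hμ : μ ≠ 0) : ∫ s, g s * Real.cos (μ * s) ∂m < ∫ s, g s ∂m := by
  have hcos : Integrable (fun s => g s * Real.cos (μ * s)) m :=
    hg.mul_bdd (by fun_prop : Continuous fun s => Real.cos (μ * s)).aestronglyMeasurable
      (.of_forall fun s => (Real.norm_eq_abs _).trans_le (Real.abs_cos_le_one _))
  have hgap_nonneg : 0 ≤ fun s => g s - g s * Real.cos (μ * s) := fun s => by
    have := mul_nonneg (hg_nonneg s) (sub_nonneg.2 (Real.cos_le_one (μ * s)))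
    simp only [Pi.zero_apply]
    linarith
  have hgap_supp : Function.support g \ {s | Real.cos (μ * s) = 1} ⊆
      Function.support fun s => g s - g s * Real.cos (μ * s) := by
    rintro s ⟨hgs, hcos1⟩ h
    have : g s * (1 - Real.cos (μ * s)) = 0 := by linarith
    rcases mul_eq_zero.mp this with h' | h'
    · exact hgs h'
    · exact hcos1 (show Real.cos (μ * s) = 1 by linarith)
  have hgap : 0 < ∫ s, (g s - g s * Real.cos (μ * s)) ∂m := by
    rw [integral_pos_iff_support_of_nonneg hgap_nonneg (hg.sub hcos)]
    calc 0 < m (Function.support g) := hg_supp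
      _ = m (Function.support g \ {s | Real.cos (μ * s) = 1}) :=
        (measure_sdiff_null ((Real.countable_setOf_cos_mul_eq_one hμ).measure_zero _)).symm
      _ ≤ _ := measure_mono hgap_supp
  rw [integral_sub hg hcos] at hgap
  linarith

theorem re_integral_ofReal_mul_cexp {J : ℝ → ℝ} {σ : ℝ}
    (hJ : Integrable fun s => J s * Real.exp (-σ * s)) (μ : ℝ) :
    (∫ s, (J s : ℂ) * cexp (-((σ + μ * I) * s))).re =
      ∫ s, J s * Real.exp (-σ * s) * Real.cos (μ * s) := by
  have hfactor : ∀ s : ℝ, (J s : ℂ) * cexp (-((σ + μ * I) * s)) =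
      ((J s * Real.exp (-σ * s) : ℝ) : ℂ) * cexp ((-(μ * s) : ℝ) * I) := by
    intro s
    push_cast
    rw [mul_assoc, ← Complex.exp_add]
    ring_nf
  have hint : Integrable fun s : ℝ => (J s : ℂ) * cexp (-((σ + μ * I) * s)) := by
    simp_rw [hfactor]
    refine hJ.ofReal.mul_bdd (c := 1) ?_ (.of_forall fun s => (Complex.norm_exp_ofReal_mul_I _).le)
    exact (by fun_prop : Continuous fun s : ℝ => cexp ((-(μ * s) : ℝ) * I)).aestronglyMeasurable
  rw [← RCLike.re_to_complex, ← integral_re hint]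
  congr 1 with s
  rw [hfactor, RCLike.re_to_complex, Complex.re_ofReal_mul, Complex.exp_ofReal_mul_I_re, Real.cos_neg]

theorem re_quadratic_add_integral_cexp {J : ℝ → ℝ} {σ : ℝ}
    (hJ : Integrable fun s => J s * Real.exp (-σ * s)) (d c a b μ : ℝ) :
    ((d : ℂ) * (σ + μ * I) ^ 2 - c * (σ + μ * I) + a +
        b * ∫ s, (J s : ℂ) * cexp (-((σ + μ * I) * s))).re =
      d * (σ ^ 2 - μ ^ 2) - c * σ + a + b * ∫ s, J s * Real.exp (-σ * s) * Real.cos (μ * s) := by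
  simp [re_integral_ofReal_mul_cexp hJ, sq]

theorem no_other_zero_on_vertical_line_general (J : ℝ → ℝ)
    (hJnonneg : ∀ s, 0 ≤ J s)
    (hJmom : ∀ ρ : ℝ, Integrable (fun s => J s * Real.exp (ρ * s)))
    (hJsupp : ∃ x y : ℝ, x < y ∧ ∀ s ∈ Set.Ioo x y, 0 < J s)
    (d c a b : ℝ) (hd : 0 ≤ d) (hb : 0 < b)
    (Δ : ℂ → ℂ)
    (hΔ : Δ = fun z => (d:ℂ) * z^2 - (c:ℂ) * z + (a:ℂ) +
      (b:ℂ) * ∫ s : ℝ, (J s : ℂ) * Complex.exp (-(z * (s:ℂ))))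
    (lams : ℝ) (hroot : Δ (lams : ℂ) = 0) :
    ∀ μ : ℝ, μ ≠ 0 → Δ ((lams : ℂ) + (μ:ℂ) * Complex.I) ≠ 0 := by
  intro μ hμ hzero
  have hg : Integrable fun s => J s * Real.exp (-lams * s) := hJmom (-lams)
  have hre : ∀ ν : ℝ, (Δ (lams + ν * I)).re = d * (lams ^ 2 - ν ^ 2) - c * lams + a +
      b * ∫ s, J s * Real.exp (-lams * s) * Real.cos (ν * s) := by
    subst hΔ
    exact re_quadratic_add_integral_cexp hg d c a b
  have hroot_re := hre 0
  have hzero_re := hre μ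
  simp only [ofReal_zero, zero_mul, add_zero, hroot, hzero, zero_re, Real.cos_zero, mul_one]
    at hroot_re hzero_re
  obtain ⟨x, y, hxy, hJpos⟩ := hJsupp
  have hsupp : 0 < volume (Function.support fun s => J s * Real.exp (-lams * s)) :=
    calc 0 < volume (Set.Ioo x y) := by simpa using hxy
      _ ≤ _ := measure_mono fun s hs => (mul_pos (hJpos s hs) (Real.exp_pos _)).ne'
  have hlt := integral_mul_cos_lt_integral hg
    (fun s => mul_nonneg (hJnonneg s) (Real.exp_pos _).le) hsupp hμ
  linarith [mul_lt_mul_of_pos_left hlt hb, mul_nonneg hd (sq_nonneg μ)]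

theorem no_other_zero_on_vertical_line (J : ℝ → ℝ)
    (hJc : Continuous J) (hJeven : ∀ s, J (-s) = J s) (hJnonneg : ∀ s, 0 ≤ J s)
    (hJint : (∫ s : ℝ, J s) = 1)
    (hJmom : ∀ ρ : ℝ, Integrable (fun s => J s * Real.exp (ρ * s)))
    (hJsupp : ∃ x y : ℝ, x < y ∧ ∀ s ∈ Set.Ioo x y, 0 < J s)
    (d c a b : ℝ) (hd : 0 ≤ d) (ha : a < 0) (hb : 0 < b) (hba : b < -a)
    (Δ : ℂ → ℂ)
    (hΔ : Δ = fun z => (d:ℂ) * z^2 - (c:ℂ) * z + (a:ℂ) +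
      (b:ℂ) * ∫ s : ℝ, (J s : ℂ) * Complex.exp (-(z * (s:ℂ))))
    (lams : ℝ) (hlams : lams < 0) (hroot : Δ (lams : ℂ) = 0) :
    ∀ μ : ℝ, μ ≠ 0 → Δ ((lams : ℂ) + (μ:ℂ) * Complex.I) ≠ 0 :=
  no_other_zero_on_vertical_line_general J hJnonneg hJmom hJsupp d c a b hd hb Δ hΔ lams hroot
end

section
/- Let Ψ(ξ) = 2εK₁ e^{−α|ξ|} with ε, K₁, α > 0 and 4εK₁ < α. Define the iterated convolutions Ψ^{∗1} = Ψ and Ψ^{∗j} = Ψ ∗ Ψ^{∗(j−1)}. Then the series ∑_{j=1}^{∞} Ψ^{∗j}(ξ) converges and is bounded by K₂ e^{−ν|ξ|} for some constants K₂ > 0 and ν > 0 (one may take ν = √(α² − 4εK₁α)). -/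
/-!
Write `Ψ = c e^{-α|·|}` with `c = 2εK₁`. Convolving two two-sided exponentials explicitly shows
that `S = (cα/ν) e^{-ν|·|}` solves `S = Ψ + Ψ ∗ S` exactly when `α² - ν² = 2cα`; on the Laplace
side this is `Ŝ = Ψ̂ / (1 - Ψ̂)` with `Ψ̂(z) = 2cα / (α² - z²)`. Since `Ψ ≥ 0`, induction gives
`Ψ^{∗1} + ⋯ + Ψ^{∗(n+1)} = Ψ + Ψ ∗ (Ψ^{∗1} + ⋯ + Ψ^{∗n}) ≤ Ψ + Ψ ∗ S = S`, so the series of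
nonnegative terms converges and its sum is at most `S`.
-/

open MeasureTheory Real Set

theorem integrable_exp_neg_mul_abs {c : ℝ} (hc : 0 < c) :
    Integrable fun x : ℝ => exp (-c * |x|) := by
  have hIic : IntegrableOn (fun x : ℝ => exp (-c * |x|)) (Iic 0) :=
    (integrableOn_exp_mul_Iic hc 0).congr_fun
      (fun x hx => by simp only [abs_of_nonpos (show x ≤ 0 from hx)]; ring_nf) measurableSet_Iic
  have hIoi : IntegrableOn (fun x : ℝ => exp (-c * |x|)) (Ioi 0) :=
    (integrableOn_exp_mul_Ioi (neg_lt_zero.mpr hc) 0).congr_fun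
      (fun x hx => by rw [abs_of_pos (show 0 < x from hx)]) measurableSet_Ioi
  simpa [Iic_union_Ioi] using hIic.union hIoi

theorem integrable_exp_neg_mul_abs_sub_mul_exp_neg_mul_abs {a v : ℝ} (ha : 0 ≤ a) (hv : 0 < v)
    (ξ : ℝ) : Integrable fun η : ℝ => exp (-a * |ξ - η|) * exp (-v * |η|) := by
  refine (integrable_exp_neg_mul_abs hv).mono' (by fun_prop) (.of_forall fun η => ?_)
  rw [norm_of_nonneg (by positivity)]
  exact mul_le_of_le_one_left (exp_pos _).le
    (exp_le_one_iff.mpr (mul_nonpos_of_nonpos_of_nonneg (neg_nonpos.mpr ha) (abs_nonneg _)))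

theorem integral_exp_mul {c : ℝ} (hc : c ≠ 0) (a b : ℝ) :
    ∫ x in a..b, exp (c * x) = (exp (c * b) - exp (c * a)) / c := by
  rw [intervalIntegral.integral_comp_mul_left exp hc, integral_exp, smul_eq_mul, inv_mul_eq_div]

theorem integral_exp_neg_mul_abs_sub_mul_exp_neg_mul_abs_of_nonneg {a v : ℝ} (ha : 0 < a)
    (hv : 0 < v) (hav : a ≠ v) {ξ : ℝ} (hξ : 0 ≤ ξ) :
    ∫ η : ℝ, exp (-a * |ξ - η|) * exp (-v * |η|)
      = (2 * a * exp (-v * ξ) - 2 * v * exp (-a * ξ)) / (a ^ 2 - v ^ 2) := by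
  have hF := integrable_exp_neg_mul_abs_sub_mul_exp_neg_mul_abs ha.le hv ξ
  set F := fun η : ℝ => exp (-a * |ξ - η|) * exp (-v * |η|)
  have hleft : ∫ η in Iic 0, F η = exp (-a * ξ) / (a + v) := by
    rw [setIntegral_congr_fun measurableSet_Iic (g := fun η => exp (-a * ξ) * exp ((a + v) * η))
      fun η (hη : η ≤ 0) => ?_, integral_const_mul, integral_exp_mul_Iic (by linarith)]
    · rw [mul_zero, exp_zero, mul_one_div]
    · simp only [F, abs_of_nonneg (by linarith : 0 ≤ ξ - η), abs_of_nonpos hη, ← exp_add]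
      ring_nf
  have hmiddle : ∫ η in Ioc 0 ξ, F η = (exp (-v * ξ) - exp (-a * ξ)) / (a - v) := by
    rw [setIntegral_congr_fun measurableSet_Ioc (g := fun η => exp (-a * ξ) * exp ((a - v) * η))
      fun η (hη : η ∈ Ioc 0 ξ) => ?_, ← intervalIntegral.integral_of_le hξ,
      intervalIntegral.integral_const_mul, integral_exp_mul (sub_ne_zero.mpr hav)]
    · rw [mul_div_assoc', mul_sub, ← exp_add, mul_zero, exp_zero, mul_one]
      ring_nf
    · simp only [F, abs_of_nonneg (by linarith [hη.2] : 0 ≤ ξ - η), abs_of_pos hη.1, ← exp_add]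
      ring_nf
  have hright : ∫ η in Ioi ξ, F η = exp (-v * ξ) / (a + v) := by
    rw [setIntegral_congr_fun measurableSet_Ioi (g := fun η => exp (a * ξ) * exp (-(a + v) * η))
      fun η (hη : ξ < η) => ?_, integral_const_mul, integral_exp_mul_Ioi (by linarith)]
    · rw [neg_div_neg_eq, mul_div_assoc', ← exp_add]
      ring_nf
    · simp only [F, abs_of_nonpos (by linarith : ξ - η ≤ 0), abs_of_pos (hξ.trans_lt hη), ← exp_add]
      ring_nf
  have hsplit : ∫ η, F η = (∫ η in Iic 0, F η) + ((∫ η in Ioc 0 ξ, F η) + ∫ η in Ioi ξ, F η) := by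
    rw [← setIntegral_union (Ioc_disjoint_Ioi le_rfl) measurableSet_Ioi hF.integrableOn
      hF.integrableOn, Ioc_union_Ioi_eq_Ioi hξ, intervalIntegral.integral_Iic_add_Ioi
      hF.integrableOn hF.integrableOn]
  have hsum : a + v ≠ 0 := by linarith
  have hdiff : a - v ≠ 0 := sub_ne_zero.mpr hav
  have hsq : a ^ 2 - v ^ 2 ≠ 0 := by rw [sq_sub_sq]; positivity
  rw [hsplit, hleft, hmiddle, hright]
  field_simp
  ring

theorem integral_exp_neg_mul_abs_sub_mul_exp_neg_mul_abs {a v : ℝ} (ha : 0 < a) (hv : 0 < v)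
    (hav : a ≠ v) (ξ : ℝ) :
    ∫ η : ℝ, exp (-a * |ξ - η|) * exp (-v * |η|)
      = (2 * a * exp (-v * |ξ|) - 2 * v * exp (-a * |ξ|)) / (a ^ 2 - v ^ 2) := by
  wlog hξ : 0 ≤ ξ generalizing ξ
  · rw [← abs_neg, ← this (-ξ) (by linarith), ← integral_neg_eq_self]
    congr! 4 with η
    · rw [← abs_neg]; ring_nf
    · rw [abs_neg]
  rw [abs_of_nonneg hξ]
  exact integral_exp_neg_mul_abs_sub_mul_exp_neg_mul_abs_of_nonneg ha hv hav hξ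

theorem exp_neg_mul_abs_add_integral_mul_eq {c α ν : ℝ} (hν : 0 < ν) (hνα : ν < α)
    (hc : α ^ 2 - ν ^ 2 = 2 * c * α) (ξ : ℝ) :
    c * exp (-α * |ξ|) + ∫ η, c * exp (-α * |ξ - η|) * (c * α / ν * exp (-ν * |η|))
      = c * α / ν * exp (-ν * |ξ|) := by
  have hα : 0 < α := hν.trans hνα
  have hconv := integral_exp_neg_mul_abs_sub_mul_exp_neg_mul_abs hα hν hνα.ne' ξ
  have hc0 : c ≠ 0 := by
    rintro rfl
    nlinarith
  simp_rw [mul_mul_mul_comm c, integral_const_mul, hconv, hc]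
  field_simp
  ring

section NeumannSeries

open Finset Function

variable {X : Type*} [MeasurableSpace X] {μ : Measure X} [SFinite μ] {K : X → X → ℝ}
  {g S : X → ℝ} {f : ℕ → X → ℝ}

theorem measurable_and_nonneg_of_iterate (hK : Measurable (uncurry K)) (hK0 : ∀ x y, 0 ≤ K x y)
    (hg : Measurable g) (hg0 : 0 ≤ g) (hf0 : f 0 = g)
    (hf : ∀ n x, f (n + 1) x = ∫ y, K x y * f n y ∂μ) (n : ℕ) :
    Measurable (f n) ∧ 0 ≤ f n := by
  induction n with
  | zero => exact hf0 ▸ ⟨hg, hg0⟩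
  | succ n ih =>
    rw [funext (hf n)]
    exact ⟨(hK.mul (ih.1.comp measurable_snd)).stronglyMeasurable.integral_prod_right'.measurable,
      fun x => integral_nonneg fun y => mul_nonneg (hK0 x y) (ih.2 y)⟩

theorem sum_range_iterate_le_of_supersolution (hK : Measurable (uncurry K))
    (hK0 : ∀ x y, 0 ≤ K x y) (hg : Measurable g) (hg0 : 0 ≤ g) (hf0 : f 0 = g)
    (hf : ∀ n x, f (n + 1) x = ∫ y, K x y * f n y ∂μ) (hS0 : 0 ≤ S)
    (hKS : ∀ x, Integrable (fun y => K x y * S y) μ)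
    (hS : ∀ x, g x + ∫ y, K x y * S y ∂μ ≤ S x) (n : ℕ) (x : X) :
    ∑ i ∈ range n, f i x ≤ S x := by
  have hfm := measurable_and_nonneg_of_iterate hK hK0 hg hg0 hf0 hf
  induction n generalizing x with
  | zero => simpa using hS0 x
  | succ n ih =>
    have hint : ∀ i ∈ range n, Integrable (fun y => K x y * f i y) μ := fun i hi =>
      (hKS x).mono' (hK.of_uncurry_left.mul (hfm i).1).aestronglyMeasurable
        (.of_forall fun y => by
          rw [norm_of_nonneg (mul_nonneg (hK0 x y) ((hfm i).2 y))]
          exact mul_le_mul_of_nonneg_left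
            ((single_le_sum (fun j _ => (hfm j).2 y) hi).trans (ih y)) (hK0 x y))
    calc ∑ i ∈ range (n + 1), f i x = g x + ∫ y, K x y * ∑ i ∈ range n, f i y ∂μ := by
          simp_rw [sum_range_succ', hf, mul_sum, integral_finsetSum _ hint, hf0, add_comm]
      _ ≤ g x + ∫ y, K x y * S y ∂μ := by
          refine add_le_add_right (integral_mono_of_nonneg ?_ (hKS x) ?_) _
          · exact .of_forall fun y => mul_nonneg (hK0 x y) (sum_nonneg fun i _ => (hfm i).2 y)
          · exact .of_forall fun y => mul_le_mul_of_nonneg_left (ih y) (hK0 x y)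
      _ ≤ S x := hS x

theorem summable_iterate_and_tsum_le_of_supersolution (hK : Measurable (uncurry K))
    (hK0 : ∀ x y, 0 ≤ K x y) (hg : Measurable g) (hg0 : 0 ≤ g) (hf0 : f 0 = g)
    (hf : ∀ n x, f (n + 1) x = ∫ y, K x y * f n y ∂μ) (hS0 : 0 ≤ S)
    (hKS : ∀ x, Integrable (fun y => K x y * S y) μ)
    (hS : ∀ x, g x + ∫ y, K x y * S y ∂μ ≤ S x) (x : X) :
    Summable (fun n => f n x) ∧ ∑' n, f n x ≤ S x := by
  have hnonneg n := (measurable_and_nonneg_of_iterate hK hK0 hg hg0 hf0 hf n).2 x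
  have hbound n := sum_range_iterate_le_of_supersolution hK hK0 hg hg0 hf0 hf hS0 hKS hS n x
  exact ⟨summable_of_sum_range_le hnonneg hbound, Real.tsum_le_of_sum_range_le hnonneg hbound⟩

end NeumannSeries

theorem iterated_convolution_sum_bound (ε K₁ α : ℝ) (hε : 0 < ε) (hK : 0 < K₁) (hα : 0 < α)
    (hsmall : 4 * ε * K₁ < α)
    (Psi : ℕ → ℝ → ℝ)
    (h1 : Psi 1 = fun ξ => 2 * ε * K₁ * Real.exp (-α * |ξ|))
    (hrec : ∀ j : ℕ, 2 ≤ j → Psi j = fun ξ => ∫ η : ℝ, Psi 1 (ξ - η) * Psi (j - 1) η) :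
    ∃ K₂ : ℝ, 0 < K₂ ∧ 0 < Real.sqrt (α^2 - 4 * ε * K₁ * α) ∧
      ∀ ξ : ℝ, Summable (fun j : ℕ => Psi (j + 1) ξ) ∧
        (∑' j : ℕ, Psi (j + 1) ξ) ≤ K₂ * Real.exp (-Real.sqrt (α^2 - 4 * ε * K₁ * α) * |ξ|) := by
  have hd : 0 < α ^ 2 - 4 * ε * K₁ * α := by nlinarith
  set ν := √(α ^ 2 - 4 * ε * K₁ * α)
  have hν : 0 < ν := sqrt_pos.mpr hd
  have hνα : ν < α := (sqrt_lt' hα).mpr (by nlinarith [mul_pos (mul_pos hε hK) hα])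
  have hc : α ^ 2 - ν ^ 2 = 2 * (2 * ε * K₁) * α := by rw [sq_sqrt hd.le]; ring
  refine ⟨2 * ε * K₁ * α / ν, by positivity, hν, fun ξ => ?_⟩
  refine summable_iterate_and_tsum_le_of_supersolution (μ := volume)
    (K := fun ξ η => Psi 1 (ξ - η)) (S := fun ξ => 2 * ε * K₁ * α / ν * exp (-ν * |ξ|))
    (by rw [h1]; fun_prop) (fun _ _ => by rw [h1]; positivity) (by rw [h1]; fun_prop)
    (fun _ => by rw [h1]; positivity) rfl (fun n ξ => by simp [hrec (n + 2) (by omega)])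
    (fun _ => by positivity) (fun ξ => ?_) (fun ξ => ?_) ξ
  · rw [h1]
    exact (integrable_exp_neg_mul_abs_sub_mul_exp_neg_mul_abs hα.le hν ξ).const_mul
      (2 * ε * K₁ * (2 * ε * K₁ * α / ν)) |>.congr
      (.of_forall fun η => by ring)
  · rw [h1]
    exact (exp_neg_mul_abs_add_integral_mul_eq hν hνα hc ξ).le
end

section
/- Suppose U : ℝ → ℝ satisfies |U(ξ) − 1| ≤ C e^{λξ} for all ξ ≥ 0, where C > 0 and λ < 0, and |U(ξ) − 1| ≤ 2 for all ξ ∈ ℝ. Let J be a continuous nonnegative even kernel with ∫J = 1 and all exponential moments finite. Then there is C' > 0 with |(J ∗ (U − 1))(ξ)| ≤ C' e^{λξ} for all ξ ≥ 0. -/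
open MeasureTheory Real

theorem convolution_decay_transfer (J U : ℝ → ℝ) (C lam : ℝ) (hC : 0 < C) (hlam : lam < 0)
    (hJc : Continuous J) (hJeven : ∀ s, J (-s) = J s) (hJnonneg : ∀ s, 0 ≤ J s)
    (hJint : (∫ s : ℝ, J s) = 1)
    (hJmom : ∀ ρ : ℝ, Integrable (fun s => J s * Real.exp (ρ * s)))
    (hU : ∀ ξ : ℝ, 0 ≤ ξ → |U ξ - 1| ≤ C * Real.exp (lam * ξ))
    (hUb : ∀ ξ : ℝ, |U ξ - 1| ≤ 2) :
    ∃ C' : ℝ, 0 < C' ∧ ∀ ξ : ℝ, 0 ≤ ξ →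
      |∫ η : ℝ, J η * (U (ξ - η) - 1)| ≤ C' * Real.exp (lam * ξ) := by
  set M := ∫ s : ℝ, J s * Real.exp (-lam * s) with hMdef
  have hMint : Integrable (fun s => J s * Real.exp (-lam * s)) := hJmom (-lam)
  have hM0 : 0 ≤ M :=
    integral_nonneg fun s => mul_nonneg (hJnonneg s) (Real.exp_pos _).le
  refine ⟨(C + 2) * M + 1, by positivity, fun ξ hξ => ?_⟩
  have key : ∀ η : ℝ, |J η * (U (ξ - η) - 1)| ≤
      (C + 2) * (J η * Real.exp (-lam * η)) * Real.exp (lam * ξ) := by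
    intro η
    rw [abs_mul, abs_of_nonneg (hJnonneg η)]
    have hb : |U (ξ - η) - 1| ≤ (C + 2) * Real.exp (lam * (ξ - η)) := by
      rcases le_or_gt η ξ with h | h
      · calc |U (ξ - η) - 1| ≤ C * Real.exp (lam * (ξ - η)) := hU _ (by linarith)
          _ ≤ (C + 2) * Real.exp (lam * (ξ - η)) := by
              nlinarith [Real.exp_pos (lam * (ξ - η))]
      · have h1 : (1 : ℝ) ≤ Real.exp (lam * (ξ - η)) := by
          apply Real.one_le_exp; nlinarith
        calc |U (ξ - η) - 1| ≤ 2 := hUb _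
          _ ≤ (C + 2) * Real.exp (lam * (ξ - η)) := by nlinarith
    have hsplit : Real.exp (lam * (ξ - η)) = Real.exp (-lam * η) * Real.exp (lam * ξ) := by
      rw [← Real.exp_add]; ring_nf
    calc J η * |U (ξ - η) - 1| ≤ J η * ((C + 2) * Real.exp (lam * (ξ - η))) :=
          mul_le_mul_of_nonneg_left hb (hJnonneg η)
      _ = (C + 2) * (J η * Real.exp (-lam * η)) * Real.exp (lam * ξ) := by
          rw [hsplit]; ring
  calc |∫ η : ℝ, J η * (U (ξ - η) - 1)|
      ≤ ∫ η : ℝ, |J η * (U (ξ - η) - 1)| := by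
        exact norm_integral_le_integral_norm (fun η : ℝ => J η * (U (ξ - η) - 1))
    _ ≤ ∫ η : ℝ, (C + 2) * (J η * Real.exp (-lam * η)) * Real.exp (lam * ξ) := by
        refine integral_mono_of_nonneg (Filter.Eventually.of_forall fun η => abs_nonneg _)
          (((hMint.const_mul (C + 2)).mul_const _)) (Filter.Eventually.of_forall key)
    _ = (C + 2) * M * Real.exp (lam * ξ) := by
        rw [MeasureTheory.integral_mul_const, MeasureTheory.integral_const_mul]
    _ ≤ ((C + 2) * M + 1) * Real.exp (lam * ξ) := by
        nlinarith [Real.exp_pos (lam * ξ)]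
end

section
/- No super-exponential decay for positive solutions: let V : ℝ → ℝ be positive, C², integrable against e^{bξ} for every b > 0, and satisfy c V' − d V'' ≥ a̲ V + b̲ (J∗V) on ℝ with b̲ > 0 and a̲ ∈ ℝ, where d ≥ 0, c ∈ ℝ, and J is as usual with J > 0 on an open interval. Then multiplying by e^{bξ} and integrating gives (−cb − db² ) V_b ≥ a̲ V_b + b̲ V_b ∫ J(ξ)e^{bξ}dξ where V_b = ∫ V(ξ)e^{bξ}dξ > 0; hence −cb − db² − b̲∫J(ξ)e^{bξ}dξ ≥ a̲ for every b > 0 for which V_b < ∞. Since the left side tends to −∞ as b → ∞, V_b cannot be finite for all b > 0. -/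
/-!
Multiplying the inequality by `e^{bξ}` and integrating, two integrations by parts turn `V'` and
`V''` into `-b V_b` and `b² V_b`, and the convolution becomes `V_b ∫ J e^{b·}`. Dividing by
`V_b > 0` gives `a̲ + b̲ ∫ J e^{b·} ≤ -c b - d b²` for every `b > 0`. Since `J` is even, it is
positive on some interval `(p, q)` with `p > 0`, so `∫ J e^{b·}` grows at least like `e^{bp}`,
which eventually beats every quadratic in `b`.
-/

open MeasureTheory Real Filter Set
open scoped Convolution

noncomputable section

/-- The two-sided Laplace transform `f_b = ∫ f(ξ) e^{bξ} dξ` (`0` when not integrable). -/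
def expMoment (f : ℝ → ℝ) (b : ℝ) : ℝ := ∫ ξ, f ξ * exp (b * ξ)

theorem expMoment_deriv {u : ℝ → ℝ} {b : ℝ} (hu : Differentiable ℝ u)
    (hui : Integrable fun ξ => u ξ * exp (b * ξ))
    (hui' : Integrable fun ξ => deriv u ξ * exp (b * ξ)) :
    expMoment (deriv u) b = -b * expMoment u b := by
  have hderiv : ∀ x, HasDerivAt (fun ξ => u ξ * exp (b * ξ))
      (deriv u x * exp (b * x) + b * (u x * exp (b * x))) x := by
    intro x
    exact ((hu x).hasDerivAt.mul (hasDerivAt_const_mul b).exp).congr_deriv (by ring)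
  have hzero := integral_eq_zero_of_hasDerivAt_of_integrable hderiv
    (hui'.add (hui.const_mul b)) hui
  rw [integral_add hui' (hui.const_mul b), integral_const_mul] at hzero
  rw [expMoment, expMoment]
  linarith

theorem expMoment_pos {f : ℝ → ℝ} {b : ℝ} (hf : ∀ ξ, 0 < f ξ)
    (hfi : Integrable fun ξ => f ξ * exp (b * ξ)) : 0 < expMoment f b := by
  have hpos : ∀ ξ, 0 < f ξ * exp (b * ξ) := fun ξ => mul_pos (hf ξ) (exp_pos _)
  rw [expMoment, integral_pos_iff_support_of_nonneg (fun ξ => (hpos ξ).le) hfi,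
    Function.support_eq_univ fun ξ => (hpos ξ).ne']
  simp

section Convolution

variable {f g : ℝ → ℝ} {b : ℝ}

theorem convolution_mul_exp_eq (ξ : ℝ) :
    ((fun η => f η * exp (b * η)) ⋆[ContinuousLinearMap.mul ℝ ℝ]
      fun s => g s * exp (b * s)) ξ
      = (∫ η, g (ξ - η) * f η) * exp (b * ξ) := by
  rw [convolution_def, ← integral_mul_const]
  congr 1 with η
  rw [ContinuousLinearMap.mul_apply', show b * ξ = b * η + b * (ξ - η) by ring, exp_add]
  ring

variable (hf : Integrable fun ξ => f ξ * exp (b * ξ))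
  (hg : Integrable fun s => g s * exp (b * s))
include hf hg

theorem integrable_convolution_mul_exp :
    Integrable fun ξ => (∫ η, g (ξ - η) * f η) * exp (b * ξ) := by
  simpa only [← convolution_mul_exp_eq] using hf.integrable_convolution _ hg

theorem expMoment_convolution :
    expMoment (fun ξ => ∫ η, g (ξ - η) * f η) b = expMoment f b * expMoment g b := by
  simp only [expMoment, ← convolution_mul_exp_eq]
  exact integral_convolution _ hf hg

end Convolution

theorem exists_Ioo_pos_of_even {J : ℝ → ℝ} (hJeven : ∀ s, J (-s) = J s)
    (hJsupp : ∃ x y : ℝ, x < y ∧ ∀ s ∈ Ioo x y, 0 < J s) :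
    ∃ p q : ℝ, 0 < p ∧ p < q ∧ ∀ s ∈ Ioo p q, 0 < J s := by
  obtain ⟨x, y, hxy, hJ⟩ := hJsupp
  obtain ⟨x, y, hxy, hy, hJ⟩ : ∃ x y, x < y ∧ 0 < y ∧ ∀ s ∈ Ioo x y, 0 < J s := by
    rcases lt_or_ge 0 y with hy | hy
    · exact ⟨x, y, hxy, hy, hJ⟩
    · refine ⟨-y, -x, neg_lt_neg hxy, by linarith, fun s hs => ?_⟩
      rw [← hJeven]
      exact hJ (-s) ⟨by linarith [hs.2], by linarith [hs.1]⟩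
  refine ⟨max x (y / 2), y, by positivity, max_lt hxy (by linarith), fun s hs => ?_⟩
  exact hJ s ⟨(le_max_left _ _).trans_lt hs.1, hs.2⟩

theorem integral_mul_exp_le_expMoment {J : ℝ → ℝ} {b p q : ℝ} (hb : 0 ≤ b) (hpq : p ≤ q)
    (hJc : Continuous J) (hJnonneg : ∀ s, 0 ≤ J s)
    (hJi : Integrable fun s => J s * exp (b * s)) :
    (∫ s in p..q, J s) * exp (b * p) ≤ expMoment J b :=
  calc (∫ s in p..q, J s) * exp (b * p) = ∫ s in p..q, J s * exp (b * p) :=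
        (intervalIntegral.integral_mul_const _ _).symm
    _ ≤ ∫ s in p..q, J s * exp (b * s) := by
        refine intervalIntegral.integral_mono_on hpq
          ((hJc.mul continuous_const).intervalIntegrable p q)
          ((hJc.mul (continuous_const_mul b).rexp).intervalIntegrable p q) fun s hs => ?_
        gcongr
        exacts [hJnonneg s, hs.1]
    _ ≤ expMoment J b := by
        rw [intervalIntegral.integral_of_le hpq]
        exact setIntegral_le_integral hJi
          (Eventually.of_forall fun s => mul_nonneg (hJnonneg s) (exp_pos _).le)

theorem tendsto_affine_add_mul_exp_atTop (α β : ℝ) {γ p : ℝ} (hγ : 0 < γ) (hp : 0 < p) :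
    Tendsto (fun b => α + β * b + γ * exp (b * p)) atTop atTop := by
  -- `e^{bp} ≥ (bp)² / 2` for `b ≥ 0`
  have hquad : Tendsto (fun b => α + b * (β + γ * p ^ 2 / 2 * b)) atTop atTop :=
    tendsto_atTop_add_const_left _ _ <| tendsto_id.atTop_mul_atTop₀ <|
      tendsto_atTop_add_const_left _ _ <| tendsto_id.const_mul_atTop (by positivity)
  refine tendsto_atTop_mono' _ ?_ hquad
  filter_upwards [eventually_ge_atTop 0] with b hb
  have hexp := quadratic_le_exp_of_nonneg (mul_nonneg hb hp.le)
  nlinarith [mul_nonneg hb hp.le]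

theorem add_mul_expMoment_le_of_forall_le {V J : ℝ → ℝ} {c d ab bb b : ℝ}
    (hV : ∀ ξ, 0 < V ξ) (hV' : Differentiable ℝ V) (hV'' : Differentiable ℝ (deriv V))
    (hineq : ∀ ξ, ab * V ξ + bb * (∫ η, J (ξ - η) * V η)
      ≤ c * deriv V ξ - d * deriv (deriv V) ξ)
    (hJ : Integrable fun s => J s * exp (b * s))
    (hI0 : Integrable fun ξ => V ξ * exp (b * ξ))
    (hI1 : Integrable fun ξ => deriv V ξ * exp (b * ξ))
    (hI2 : Integrable fun ξ => deriv (deriv V) ξ * exp (b * ξ)) :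
    ab + bb * expMoment J b ≤ -c * b - d * b ^ 2 := by
  have hparts1 : expMoment (deriv V) b = -b * expMoment V b := expMoment_deriv hV' hI0 hI1
  have hparts2 : expMoment (deriv (deriv V)) b = b ^ 2 * expMoment V b := by
    rw [expMoment_deriv hV'' hI1 hI2, hparts1]
    ring
  have hconv := integrable_convolution_mul_exp hI0 hJ
  have hmono :
      ∫ ξ, ab * (V ξ * exp (b * ξ)) + bb * ((∫ η, J (ξ - η) * V η) * exp (b * ξ))
      ≤ ∫ ξ, c * (deriv V ξ * exp (b * ξ)) - d * (deriv (deriv V) ξ * exp (b * ξ)) :=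
    integral_mono ((hI0.const_mul ab).add (hconv.const_mul bb))
      ((hI1.const_mul c).sub (hI2.const_mul d)) fun ξ => by
        have := mul_le_mul_of_nonneg_right (hineq ξ) (exp_pos (b * ξ)).le
        dsimp only
        linarith
  rw [integral_add (hI0.const_mul ab) (hconv.const_mul bb),
    integral_sub (hI1.const_mul c) (hI2.const_mul d), integral_const_mul, integral_const_mul,
    integral_const_mul, integral_const_mul] at hmono
  change ab * expMoment V b + bb * expMoment (fun ξ => ∫ η, J (ξ - η) * V η) b
    ≤ c * expMoment (deriv V) b - d * expMoment (deriv (deriv V)) b at hmono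
  rw [expMoment_convolution hI0 hJ, hparts1, hparts2] at hmono
  refine le_of_mul_le_mul_right ?_ (expMoment_pos hV hI0)
  linarith

theorem no_superexponential_decay_general (V J : ℝ → ℝ) (c d ab bb : ℝ) (hd : 0 ≤ d)
    (hV : ∀ ξ : ℝ, 0 < V ξ) (hV2 : ContDiff ℝ 2 V) (hbb : 0 < bb)
    (hJc : Continuous J) (hJeven : ∀ s, J (-s) = J s) (hJnonneg : ∀ s, 0 ≤ J s)
    (hJmom : ∀ ρ : ℝ, Integrable (fun s => J s * Real.exp (ρ * s)))
    (hJsupp : ∃ x y : ℝ, x < y ∧ ∀ s ∈ Set.Ioo x y, 0 < J s)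
    (hineq : ∀ ξ : ℝ, ab * V ξ + bb * (∫ η : ℝ, J (ξ - η) * V η)
      ≤ c * deriv V ξ - d * deriv (deriv V) ξ)
    (hint : ∀ b : ℝ, 0 < b →
      Integrable (fun ξ : ℝ => V ξ * Real.exp (b * ξ)) ∧
      Integrable (fun ξ : ℝ => deriv V ξ * Real.exp (b * ξ)) ∧
      Integrable (fun ξ : ℝ => deriv (deriv V) ξ * Real.exp (b * ξ)) ∧
      Tendsto (fun ξ : ℝ => V ξ * Real.exp (b * ξ)) atTop (nhds 0) ∧
      Tendsto (fun ξ : ℝ => V ξ * Real.exp (b * ξ)) atBot (nhds 0) ∧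
      Tendsto (fun ξ : ℝ => deriv V ξ * Real.exp (b * ξ)) atTop (nhds 0) ∧
      Tendsto (fun ξ : ℝ => deriv V ξ * Real.exp (b * ξ)) atBot (nhds 0)) :
    False := by
  obtain ⟨p, q, hp, hpq, hJpos⟩ := exists_Ioo_pos_of_even hJeven hJsupp
  have hK : 0 < ∫ s in p..q, J s :=
    intervalIntegral.intervalIntegral_pos_of_pos_on (hJc.intervalIntegrable p q) hJpos hpq
  have hbound : ∀ b > 0, ab + c * b + bb * (∫ s in p..q, J s) * exp (b * p) ≤ 0 := by
    intro b hb
    obtain ⟨hI0, hI1, hI2, -⟩ := hint b hb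
    have hmoment := add_mul_expMoment_le_of_forall_le hV (hV2.differentiable two_ne_zero)
      hV2.differentiable_deriv_two hineq (hJmom b) hI0 hI1 hI2
    have hlower := integral_mul_exp_le_expMoment hb.le hpq.le hJc hJnonneg (hJmom b)
    nlinarith [mul_nonneg hd (sq_nonneg b), mul_le_mul_of_nonneg_left hlower hbb.le]
  have hgrowth := tendsto_affine_add_mul_exp_atTop ab c (mul_pos hbb hK) hp
  obtain ⟨b, hpos, hb⟩ := ((hgrowth.eventually_gt_atTop 0).and (eventually_gt_atTop 0)).exists
  exact (hbound b hb).not_gt hpos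

theorem no_superexponential_decay (V J : ℝ → ℝ) (c d ab bb : ℝ) (hd : 0 ≤ d)
    (hV : ∀ ξ : ℝ, 0 < V ξ) (hV2 : ContDiff ℝ 2 V) (hbb : 0 < bb)
    (hJc : Continuous J) (hJeven : ∀ s, J (-s) = J s) (hJnonneg : ∀ s, 0 ≤ J s)
    (hJint : (∫ s : ℝ, J s) = 1)
    (hJmom : ∀ ρ : ℝ, Integrable (fun s => J s * Real.exp (ρ * s)))
    (hJsupp : ∃ x y : ℝ, x < y ∧ ∀ s ∈ Set.Ioo x y, 0 < J s)
    (hineq : ∀ ξ : ℝ, ab * V ξ + bb * (∫ η : ℝ, J (ξ - η) * V η)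
      ≤ c * deriv V ξ - d * deriv (deriv V) ξ)
    (hint : ∀ b : ℝ, 0 < b →
      Integrable (fun ξ : ℝ => V ξ * Real.exp (b * ξ)) ∧
      Integrable (fun ξ : ℝ => deriv V ξ * Real.exp (b * ξ)) ∧
      Integrable (fun ξ : ℝ => deriv (deriv V) ξ * Real.exp (b * ξ)) ∧
      Tendsto (fun ξ : ℝ => V ξ * Real.exp (b * ξ)) atTop (nhds 0) ∧
      Tendsto (fun ξ : ℝ => V ξ * Real.exp (b * ξ)) atBot (nhds 0) ∧
      Tendsto (fun ξ : ℝ => deriv V ξ * Real.exp (b * ξ)) atTop (nhds 0) ∧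
      Tendsto (fun ξ : ℝ => deriv V ξ * Real.exp (b * ξ)) atBot (nhds 0)) :
    False :=
  no_superexponential_decay_general V J c d ab bb hd hV hV2 hbb hJc hJeven hJnonneg hJmom hJsupp
    hineq hint
end
end
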